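/- Let q be a prime power and L a field extension of Fq of degree m. Let 1 ≤ k < n, let H ∈ L^{k×n} have rank k, and let C = {x ∈ L^n : Hx = 0}. If for every matrix B ∈ Fq^{(n−k)×n} (viewed in L^{(n−k)×n} via the embedding Fq ⊆ L) the rank over L of the stacked n×n matrix [H; B] equals rank H + rank B, then the minimum rank distance of C equals k + 1. -/

import Mathlib

set_option autoImplicit false

open Matrix

/-- The rank weight of `x ∈ L^n`: the dimension over `F` of the `F`-span of its coordinates. -/
noncomputable def rankWeight (F : Type*) {L : Type*} [Field F] [Field L] [Algebra F L]
    {n : ℕ} (x : Fin n → L) : ℕ :=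
  Module.finrank F (Submodule.span F (Set.range x))

/-- The minimum rank distance of a code `C ⊆ L^n` equals `d`. -/
def minRankDistEq (F : Type*) {L : Type*} [Field F] [Field L] [Algebra F L]
    {n : ℕ} (C : Set (Fin n → L)) (d : ℕ) : Prop :=
  IsLeast {e | ∃ x ∈ C, ∃ y ∈ C, x ≠ y ∧ rankWeight F (x - y) = e} d

/-!
A nonzero codeword `c` of rank weight `w ≤ k` has coordinates spanning a `w`-dimensional
`F`-space, so the `F`-linear relations `a ∈ F^n` with `∑ aⱼ cⱼ = 0` form a space of dimension
`n - w ≥ n - k`. Stacking `n - k` independent such relations as the rows of `B` gives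
`rank [H; B] = k + (n - k) = n`, while `[H; B] c = 0`: a contradiction. Conversely, `k + 1`
columns of `H` are dependent over `L`, which yields a codeword supported on `k + 1` coordinates.
-/

namespace Matrix

variable {K : Type*} [Field K] {κ ι : Type*} [Fintype ι]

theorem mulVec_injective_of_rank_eq_card_width {A : Matrix κ ι K}
    (hA : A.rank = Fintype.card ι) : Function.Injective A.mulVec := by
  rw [mulVec_injective_iff, linearIndependent_iff_card_eq_finrank_span]
  exact hA.symm.trans A.rank_eq_finrank_span_cols

theorem exists_rank_eq_and_row_mem_of_le_finrank (W : Submodule K (ι → K)) {p : ℕ}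
    (hp : p ≤ Module.finrank K W) : ∃ B : Matrix (Fin p) ι K, B.rank = p ∧ ∀ i, B i ∈ W := by
  obtain ⟨v, hv⟩ := exists_linearIndependent_of_le_finrank hp
  refine ⟨of fun i => (v i : ι → K), ?_, fun i => (v i).2⟩
  exact ((hv.map' W.subtype W.ker_subtype).rank_matrix (M := of _)).trans (Fintype.card_fin p)

theorem exists_ne_zero_mulVec_eq_zero_of_card_lt [Fintype κ] (H : Matrix κ ι K) (S : Finset ι)
    (hS : Fintype.card κ < S.card) : ∃ c ≠ 0, H *ᵥ c = 0 ∧ ∀ j ∉ S, c j = 0 := by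
  let extend : (S → K) →ₗ[K] ι → K := Function.ExtendByZero.linearMap K Subtype.val
  have hker : LinearMap.ker (H.mulVecLin ∘ₗ extend) ≠ ⊥ :=
    LinearMap.ker_ne_bot_of_finrank_lt (by simpa using hS)
  obtain ⟨g, hg, hg0⟩ := Submodule.exists_mem_ne_zero_of_ne_bot hker
  refine ⟨extend g, fun h => hg0 ?_, hg, fun j hj => Function.extend_apply' _ _ _ ?_⟩
  · ext i
    simpa [extend, Subtype.val_injective.extend_apply] using congrFun h i
  · rintro ⟨i, rfl⟩
    exact hj i.2

end Matrix

variable {F L : Type*} [Field F] [Field L] [Algebra F L] {n : ℕ}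

theorem mulVec_map_algebraMap {m : Type*} (B : Matrix m (Fin n) F) (c : Fin n → L) :
    B.map (algebraMap F L) *ᵥ c = fun i => Fintype.linearCombination F c (B i) := by
  ext i
  simp [mulVec, dotProduct, Fintype.linearCombination_apply, Algebra.smul_def]

theorem finrank_ker_linearCombination_add_rankWeight (c : Fin n → L) :
    Module.finrank F (LinearMap.ker (Fintype.linearCombination F c)) + rankWeight F c = n := by
  rw [rankWeight, ← Fintype.range_linearCombination, add_comm,
    LinearMap.finrank_range_add_finrank_ker, Module.finrank_fin_fun]

theorem rankWeight_le_card_of_eq_zero_of_notMem {x : Fin n → L} {S : Finset (Fin n)}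
    (hx : ∀ j ∉ S, x j = 0) : rankWeight F x ≤ S.card := by
  classical
  have hrange : Set.range x ⊆ insert 0 ↑(S.image x) := by
    rintro _ ⟨j, rfl⟩
    by_cases hj : j ∈ S
    · exact Or.inr (Finset.mem_image_of_mem x hj)
    · exact Or.inl (hx j hj)
  calc rankWeight F x
      ≤ Module.finrank F (Submodule.span F (↑(S.image x) : Set L)) :=
        Submodule.finrank_mono ((Submodule.span_mono hrange).trans Submodule.span_insert_zero.le)
    _ ≤ (S.image x).card := finrank_span_finset_le_card _
    _ ≤ S.card := Finset.card_image_le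

theorem lt_rankWeight_of_mulVec_eq_zero {κ : Type*} {r : ℕ} (H : Matrix κ (Fin n) L)
    (hH : H.rank = r)
    (hrank : ∀ B : Matrix (Fin (n - r)) (Fin n) F,
      (fromRows H (B.map (algebraMap F L))).rank = H.rank + B.rank)
    {c : Fin n → L} (hc : H *ᵥ c = 0) (hc0 : c ≠ 0) : r < rankWeight F c := by
  by_contra! hw
  obtain ⟨B, hB, hBc⟩ := exists_rank_eq_and_row_mem_of_le_finrank
    (LinearMap.ker (Fintype.linearCombination F c)) (p := n - r)
    (by have := finrank_ker_linearCombination_add_rankWeight (F := F) c; omega)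
  have hfull : (fromRows H (B.map (algebraMap F L))).rank = Fintype.card (Fin n) := by
    have hHn : H.rank ≤ n := (H.rank_le_card_width).trans_eq (Fintype.card_fin n)
    rw [hrank, hB, Fintype.card_fin]
    omega
  refine hc0 (mulVec_injective_of_rank_eq_card_width hfull ?_)
  rw [fromRows_mulVec, mulVec_zero, hc, mulVec_map_algebraMap]
  ext (i | i)
  · simp
  · simpa using hBc i

theorem minRankDist_eq_of_rank_fromRows_add_general
    (F L : Type) [Field F]
    [Field L] [Algebra F L]
    (n k : ℕ) (hkn : k < n)
    (H : Matrix (Fin k) (Fin n) L) (hH : H.rank = k)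
    (hrank : ∀ B : Matrix (Fin (n - k)) (Fin n) F,
      (Matrix.fromRows H (B.map (algebraMap F L))).rank = H.rank + B.rank) :
    minRankDistEq F {x : Fin n → L | H *ᵥ x = 0} (k + 1) := by
  have hlower {c : Fin n → L} (hc : H *ᵥ c = 0) (hc0 : c ≠ 0) : k + 1 ≤ rankWeight F c :=
    lt_rankWeight_of_mulVec_eq_zero H hH hrank hc hc0
  obtain ⟨c, hc0, hc, hsupp⟩ :=
    H.exists_ne_zero_mulVec_eq_zero_of_card_lt (Finset.Iic ⟨k, hkn⟩) (by simp)
  refine ⟨⟨c, hc, 0, mulVec_zero H, hc0, ?_⟩, ?_⟩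
  · rw [sub_zero]
    refine le_antisymm ?_ (hlower hc hc0)
    simpa using rankWeight_le_card_of_eq_zero_of_notMem (F := F) hsupp
  · rintro _ ⟨x, hx, y, hy, hxy, rfl⟩
    exact hlower (by rw [mulVec_sub, hx, hy, sub_zero]) (sub_ne_zero.mpr hxy)

/-- If for every `B ∈ F^{(n-k)×n}` the stacked matrix `[H; B]` satisfies
`rank [H; B] = rank H + rank B`, then the code `C = {x : Hx = 0}` has minimum
rank distance exactly `k + 1`. -/
theorem minRankDist_eq_of_rank_fromRows_add
    (q m : ℕ) (hq : IsPrimePow q)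
    (F L : Type) [Field F] [Fintype F] (hF : Fintype.card F = q)
    [Field L] [Algebra F L] (hm : Module.finrank F L = m)
    (n k : ℕ) (hk : 1 ≤ k) (hkn : k < n)
    (H : Matrix (Fin k) (Fin n) L) (hH : H.rank = k)
    (hrank : ∀ B : Matrix (Fin (n - k)) (Fin n) F,
      (Matrix.fromRows H (B.map (algebraMap F L))).rank = H.rank + B.rank) :
    minRankDistEq F {x : Fin n → L | H *ᵥ x = 0} (k + 1) :=
  minRankDist_eq_of_rank_fromRows_add_general F L n k hkn H hH hrank
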